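/- arXiv:2604.02655 — 2 statements merged into one kernel-verified Lean document; each statement's English description precedes it below -/
import Mathlib

section
/- Under the statistical model, applied simultaneously to each of n records a = 1, …, n (each record a having its own cluster assignment id_a ∈ {1,…,k} and its own threshold ε_a ≥ 0, and, for each fixed a, the random variables D^{a,j}_z being mutually independent across all j ∈ {1,…,k} and z ∈ {1,…,r}), the expected number of uncertain records after r samples satisfies E[ #{ a ∈ {1,…,n} : a is uncertain } ] ≤ Σ_{a=1}^{n} exp( −2r · Σ_{i=1}^{k} ε_a² / |Ĉ_i|² ). (This is Lemma 1 of the paper; the exponent is negative, as produced by the Hoeffding-inequality argument in the paper's proof.) -/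
/-!
For a single record, orient the deviations `D j z - d*(j)` (negated for the assigned cluster) so
that being uncertain means that every cluster's oriented sum over the `r` samples is at least
`r ε`. By Hoeffding's lemma each oriented sample is sub-Gaussian with variance proxy `c_j² / 4`.
Weighting cluster `j` by `4 / c_j²` and applying the Chernoff bound to the weighted sum of all
`k r` independent samples gives `exp (-2 r ε² ∑_j 1 / c_j²)`; linearity of expectation then
sums these bounds over the records.
-/

open MeasureTheory ProbabilityTheory
open scoped Classical NNReal

namespace ProbabilityTheory

variable {Ω : Type*} [MeasurableSpace Ω] {μ : Measure Ω}

lemma measureReal_forall_sum_ge_le_of_iIndepFun {κ ι : Type*} [Fintype κ] [Fintype ι]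
    {Y : κ → ι → Ω → ℝ} (hY : iIndepFun (fun p : κ × ι => Y p.1 p.2) μ) {v : κ → ℝ≥0}
    (h_subG : ∀ j z, HasSubgaussianMGF (Y j z) (v j) μ) {t : ℝ} (ht : 0 ≤ t) :
    μ.real {ω | ∀ j, t ≤ ∑ z, Y j z ω}
      ≤ Real.exp (-(t ^ 2 * ∑ j, (v j : ℝ)⁻¹) / (2 * Fintype.card ι)) := by
  have := hY.isProbabilityMeasure
  -- weighting block `j` by `1 / v j` is the choice that optimises the Chernoff exponent
  set w : κ → ℝ≥0 := fun j => (v j)⁻¹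
  set S : ℝ := ∑ j, (v j : ℝ)⁻¹
  have hS : S = ∑ j, (w j : ℝ) := by simp [S, w]
  have hw_subG : ∀ p : κ × ι, HasSubgaussianMGF (fun ω => w p.1 * Y p.1 p.2 ω) (w p.1) μ := by
    intro p
    convert (h_subG p.1 p.2).const_mul (w p.1) using 1
    apply NNReal.eq
    change (v p.1 : ℝ)⁻¹ = ((v p.1 : ℝ)⁻¹) ^ 2 * v p.1
    rcases eq_or_ne (v p.1 : ℝ) 0 with h | h
    · simp [h]
    · field_simp
  have hw_indep : iIndepFun (fun (p : κ × ι) ω => (w p.1 : ℝ) * Y p.1 p.2 ω) μ :=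
    hY.comp (fun p x => (w p.1 : ℝ) * x) fun p => measurable_const.mul measurable_id
  have hsub : {ω | ∀ j, t ≤ ∑ z, Y j z ω} ⊆
      {ω | t * S ≤ ∑ p : κ × ι, (w p.1 : ℝ) * Y p.1 p.2 ω} := by
    intro ω hω
    simp only [Set.mem_ofPred_eq, hS, Fintype.sum_prod_type, ← Finset.mul_sum]
    rw [Finset.mul_sum]
    exact Finset.sum_le_sum fun j _ => by
      rw [mul_comm]; exact mul_le_mul_of_nonneg_left (hω j) (w j).2
  calc μ.real {ω | ∀ j, t ≤ ∑ z, Y j z ω}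
      ≤ μ.real {ω | t * S ≤ ∑ p : κ × ι, (w p.1 : ℝ) * Y p.1 p.2 ω} := measureReal_mono hsub
    _ ≤ Real.exp (-(t * S) ^ 2 / (2 * ((∑ p : κ × ι, w p.1 : ℝ≥0) : ℝ))) :=
      HasSubgaussianMGF.measure_sum_ge_le_of_iIndepFun hw_indep (fun p _ => hw_subG p)
        (mul_nonneg ht (Finset.sum_nonneg fun j _ => by positivity))
    _ = Real.exp (-(t ^ 2 * S) / (2 * Fintype.card ι)) := by
      congr 1
      rcases eq_or_ne S 0 with h | h
      · simp [h]
      · push_cast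
        simp only [Fintype.sum_prod_type, Finset.sum_const, Finset.card_univ, nsmul_eq_mul,
          ← Finset.mul_sum, ← hS]
        rw [show -(t * S) ^ 2 = -(t ^ 2 * S) * S by ring, ← mul_assoc, mul_div_mul_right _ _ h]

lemma integral_card_filter_eq_sum_measureReal [IsFiniteMeasure μ] {α : Type*} [Fintype α]
    (P : α → Ω → Prop) (hP : ∀ a, MeasurableSet {ω | P a ω}) :
    ∫ ω, ((Finset.univ.filter fun a => P a ω).card : ℝ) ∂μ = ∑ a, μ.real {ω | P a ω} := by
  have hcard : ∀ ω, ((Finset.univ.filter fun a => P a ω).card : ℝ)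
      = ∑ a, {ω | P a ω}.indicator 1 ω := fun ω => by
    rw [Finset.natCast_card_filter]
    simp only [Set.indicator_apply, Set.mem_ofPred_eq, Pi.one_apply]
  simp_rw [hcard]
  rw [integral_finsetSum _ fun a _ => (integrable_const 1).indicator (hP a)]
  exact Finset.sum_congr rfl fun a _ => integral_indicator_one (hP a)

end ProbabilityTheory

section Uncertainty

variable {Ω κ : Type*} [MeasurableSpace Ω] {r : ℕ}

/-- `D j z` is the `z`-th sample of the distance to cluster `j`, `dstar j` its mean, `id` the
assigned cluster and `ε` the threshold. -/
def IsUncertain (D : κ → Fin r → Ω → ℝ) (dstar : κ → ℝ) (id : κ) (ε : ℝ) (ω : Ω) : Prop :=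
  ε ≤ dstar id - (1 / (r : ℝ)) * ∑ z, D id z ω ∧
    ∀ i, i ≠ id → ε ≤ (1 / (r : ℝ)) * ∑ z, D i z ω - dstar i

lemma measurableSet_isUncertain [Countable κ] {D : κ → Fin r → Ω → ℝ}
    (hmeas : ∀ j z, Measurable (D j z)) (dstar : κ → ℝ) (id : κ) (ε : ℝ) :
    MeasurableSet {ω | IsUncertain D dstar id ε ω} := by
  simp only [IsUncertain, Set.ofPred_and, Set.ofPred_forall]
  measurability

lemma natCast_mul_inv_mul_sum (f : Fin r → ℝ) :
    (r : ℝ) * ((r : ℝ)⁻¹ * ∑ z, f z) = ∑ z, f z := by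
  rcases Nat.eq_zero_or_pos r with rfl | hr
  · simp
  · field_simp

lemma measureReal_isUncertain_le [Fintype κ] {μ : Measure Ω} {D : κ → Fin r → Ω → ℝ}
    (hmeas : ∀ j z, Measurable (D j z)) {lo hi : κ → ℝ}
    (hbdd : ∀ j z ω, D j z ω ∈ Set.Icc (lo j) (hi j))
    (hindep : iIndepFun (fun p : κ × Fin r => D p.1 p.2) μ) {dstar : κ → ℝ}
    (hmean : ∀ j z, ∫ ω, D j z ω ∂μ = dstar j) (id : κ) {ε : ℝ} (hε : 0 ≤ ε) :
    μ.real {ω | IsUncertain D dstar id ε ω}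
      ≤ Real.exp (-2 * r * ∑ i, ε ^ 2 / (hi i - lo i) ^ 2) := by
  have := hindep.isProbabilityMeasure
  -- orient the deviations so that uncertainty makes every block sum at least `r * ε`
  set Y : κ → Fin r → Ω → ℝ := fun j z ω =>
    if j = id then dstar j - D j z ω else D j z ω - dstar j
  set v : κ → NNReal := fun j => (‖hi j - lo j‖₊ / 2) ^ 2
  have hD : ∀ j z, HasSubgaussianMGF (fun ω => D j z ω - dstar j) (v j) μ := fun j z => by
    simpa only [hmean] using
      hasSubgaussianMGF_of_mem_Icc (hmeas j z).aemeasurable (ae_of_all μ (hbdd j z))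
  have hY : ∀ j z, HasSubgaussianMGF (Y j z) (v j) μ := by
    intro j z
    by_cases h : j = id
    · simpa [Y, h, Pi.neg_def] using (hD j z).neg
    · simpa [Y, h] using hD j z
  have hY_indep : iIndepFun (fun p : κ × Fin r => Y p.1 p.2) μ :=
    hindep.comp (fun p x => if p.1 = id then dstar p.1 - x else x - dstar p.1)
      fun p => by split_ifs <;> fun_prop
  have hsub : {ω | IsUncertain D dstar id ε ω} ⊆ {ω | ∀ j, r * ε ≤ ∑ z, Y j z ω} := by
    rintro ω ⟨h_id, h_other⟩ j
    by_cases h : j = id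
    · subst h
      simpa [Y, mul_sub, natCast_mul_inv_mul_sum] using
        mul_le_mul_of_nonneg_left h_id (Nat.cast_nonneg r)
    · simpa [Y, h, mul_sub, natCast_mul_inv_mul_sum] using
        mul_le_mul_of_nonneg_left (h_other j h) (Nat.cast_nonneg r)
  calc μ.real {ω | IsUncertain D dstar id ε ω}
      ≤ μ.real {ω | ∀ j, r * ε ≤ ∑ z, Y j z ω} := measureReal_mono hsub
    _ ≤ Real.exp (-((r * ε) ^ 2 * ∑ j, (v j : ℝ)⁻¹) / (2 * Fintype.card (Fin r))) :=
      measureReal_forall_sum_ge_le_of_iIndepFun hY_indep hY (by positivity)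
    _ = Real.exp (-2 * r * ∑ i, ε ^ 2 / (hi i - lo i) ^ 2) := by
      congr 1
      have hv : ∀ j, (v j : ℝ)⁻¹ = 4 / (hi j - lo j) ^ 2 := fun j => by
        simp [v, div_pow, sq_abs]
        norm_num
      simp only [hv, Fintype.card_fin, div_eq_mul_inv, ← Finset.mul_sum]
      rcases Nat.eq_zero_or_pos r with rfl | hr
      · simp
      · field_simp
        ring

end Uncertainty

theorem stmt0_general
    {Ω : Type*} [MeasurableSpace Ω] (μ : Measure Ω) [IsProbabilityMeasure μ]
    (n k r : ℕ)
    (c : Fin k → ℕ)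
    (D : Fin n → Fin k → Fin r → Ω → ℝ)
    (hmeas : ∀ a j z, Measurable (D a j z))
    (hbdd : ∀ a j z ω, D a j z ω ∈ Set.Icc (0 : ℝ) ((c j : ℕ) : ℝ))
    (hindep : ∀ a : Fin n,
      iIndepFun
        (fun p : Fin k × Fin r => D a p.1 p.2) μ)
    (dstar : Fin n → Fin k → ℝ)
    (hmean : ∀ a j z, ∫ ω, D a j z ω ∂μ = dstar a j)
    (ida : Fin n → Fin k) (ε : Fin n → ℝ) (hε : ∀ a, 0 ≤ ε a) :
    ∫ ω, ((Finset.univ.filter (fun a : Fin n =>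
            ε a ≤ dstar a (ida a) - (1 / (r : ℝ)) * ∑ z, D a (ida a) z ω ∧
            ∀ i, i ≠ ida a →
              ε a ≤ (1 / (r : ℝ)) * ∑ z, D a i z ω - dstar a i)).card : ℝ) ∂μ
      ≤ ∑ a : Fin n,
          Real.exp (-2 * (r : ℝ) * ∑ i, (ε a) ^ 2 / ((c i : ℕ) : ℝ) ^ 2) := by
  calc _ = ∑ a, μ.real {ω | IsUncertain (D a) (dstar a) (ida a) (ε a) ω} := by
        convert integral_card_filter_eq_sum_measureReal (μ := μ) _
          fun a => measurableSet_isUncertain (hmeas a) (dstar a) (ida a) (ε a)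
        exact Iff.rfl
    _ ≤ _ := Finset.sum_le_sum fun a _ => by
        simpa using
          measureReal_isUncertain_le (hmeas a) (hbdd a) (hindep a) (hmean a) (ida a) (hε a)

/-- Lemma 1 of the paper. Statistical model: `k` nonempty clusters with
sizes `c 1, …, c k ≥ 1`, `r ≥ 1` sampling iterations, and `n` records. For each record `a`
and cluster index `j`, the random variables `D a j 1, …, D a j r` take values in `[0, c j]`
and are identically distributed with common mean `dstar a j`; moreover, for each fixed `a`,
the variables `D a j z` are mutually independent across all pairs `(j, z)`. The empirical
mean is `d(a,j)(ω) = (1/r) · ∑_z D a j z ω`. Record `a`, assigned to cluster `ida a` with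
threshold `ε a ≥ 0`, is *uncertain* at `ω` if `dstar a (ida a) − d(a, ida a)(ω) ≥ ε a` and
`d(a,i)(ω) − dstar a i ≥ ε a` for every `i ≠ ida a`. Then the expected number of uncertain
records after `r` samples is at most `∑_a exp(−2r · ∑_i (ε a)² / (c i)²)`. -/
theorem stmt0
    {Ω : Type*} [MeasurableSpace Ω] (μ : Measure Ω) [IsProbabilityMeasure μ]
    (n k r : ℕ) (hk : 1 ≤ k) (hr : 1 ≤ r)
    (c : Fin k → ℕ) (hc : ∀ i, 1 ≤ c i)
    (D : Fin n → Fin k → Fin r → Ω → ℝ)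
    (hmeas : ∀ a j z, Measurable (D a j z))
    (hbdd : ∀ a j z ω, D a j z ω ∈ Set.Icc (0 : ℝ) ((c j : ℕ) : ℝ))
    (hident : ∀ a j z z', IdentDistrib (D a j z) (D a j z') μ μ)
    (hindep : ∀ a : Fin n,
      iIndepFun
        (fun p : Fin k × Fin r => D a p.1 p.2) μ)
    (dstar : Fin n → Fin k → ℝ)
    (hmean : ∀ a j z, ∫ ω, D a j z ω ∂μ = dstar a j)
    (ida : Fin n → Fin k) (ε : Fin n → ℝ) (hε : ∀ a, 0 ≤ ε a) :
    ∫ ω, ((Finset.univ.filter (fun a : Fin n =>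
            ε a ≤ dstar a (ida a) - (1 / (r : ℝ)) * ∑ z, D a (ida a) z ω ∧
            ∀ i, i ≠ ida a →
              ε a ≤ (1 / (r : ℝ)) * ∑ z, D a i z ω - dstar a i)).card : ℝ) ∂μ
      ≤ ∑ a : Fin n,
          Real.exp (-2 * (r : ℝ) * ∑ i, (ε a) ^ 2 / ((c i : ℕ) : ℝ) ^ 2) :=
  stmt0_general μ n k r c D hmeas hbdd hindep dstar hmean ida ε hε
end

section
/- Under the statistical model, for a single record a assigned to cluster id_a ∈ {1,…,k} with threshold ε_a ≥ 0, and with the random variables D^{a,j}_z mutually independent across all j ∈ {1,…,k} and z ∈ {1,…,r}, the probability that a is uncertain satisfies P( d*(a, id_a) − d(a, id_a) ≥ ε_a and d(a, i) − d*(a, i) ≥ ε_a for all i ≠ id_a ) ≤ exp( −2r · Σ_{i=1}^{k} ε_a² / |Ĉ_i|² ). -/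
/-!
On the uncertain event every cluster's signed deviation `s i * (d(a,i) - d*(a,i))`, with
`s = -1` at `ida` and `s = 1` elsewhere, is at least `ε`. Weighting cluster `i` by `1 / (c i)²`,
the sum of the `k r` independent bounded variables `s i * (D i z - d*(a,i)) / (c i)²` is then at
least `r ε ∑ i, 1 / (c i)²`, and Hoeffding's inequality bounds the probability of this by
`exp (-2 r ε² ∑ i, 1 / (c i)²)`; the weights `1 / (c i)²` are the ones optimising Hoeffding's
exponent.
-/

open MeasureTheory ProbabilityTheory Real Finset

lemma measureReal_sum_mul_sub_integral_ge_le_of_mem_Icc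
    {Ω ι : Type*} [MeasurableSpace Ω] {μ : Measure Ω} [IsProbabilityMeasure μ] [Fintype ι]
    {X : ι → Ω → ℝ} (hindep : iIndepFun X μ) (hmeas : ∀ i, AEMeasurable (X i) μ)
    {l u : ι → ℝ} (hbdd : ∀ i, ∀ᵐ ω ∂μ, X i ω ∈ Set.Icc (l i) (u i)) (a : ι → ℝ)
    {t : ℝ} (ht : 0 ≤ t) :
    μ.real {ω | t ≤ ∑ i, a i * (X i ω - μ[X i])}
      ≤ exp (-2 * t ^ 2 / ∑ i, (a i * (u i - l i)) ^ 2) := by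
  have hsubG : ∀ i ∈ univ, HasSubgaussianMGF (fun ω ↦ a i * (X i ω - μ[X i]))
      (⟨a i ^ 2, sq_nonneg _⟩ * (‖u i - l i‖₊ / 2) ^ 2) μ :=
    fun i _ ↦ (hasSubgaussianMGF_of_mem_Icc (hmeas i) (hbdd i)).const_mul (a i)
  have hindep' : iIndepFun (fun i ↦ (fun x ↦ a i * (x - μ[X i])) ∘ X i) μ :=
    hindep.comp (fun i x ↦ a i * (x - μ[X i])) fun i ↦ by fun_prop
  refine (HasSubgaussianMGF.measure_sum_ge_le_of_iIndepFun hindep' hsubG ht).trans_eq ?_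
  have hparam : ∀ i, ((⟨a i ^ 2, sq_nonneg _⟩ * (‖u i - l i‖₊ / 2) ^ 2 : NNReal) : ℝ)
      = (a i * (u i - l i)) ^ 2 / 4 := fun i ↦ by
    change a i ^ 2 * (‖u i - l i‖ / 2) ^ 2 = _
    rw [Real.norm_eq_abs, div_pow, sq_abs]
    ring
  rw [NNReal.coe_sum]
  simp only [hparam, ← sum_div]
  congr 1
  ring

lemma natCast_mul_le_sum_mul_sub {r : ℕ} {f : Fin r → ℝ} {s m ε : ℝ}
    (h : ε ≤ s * (1 / (r : ℝ) * ∑ z, f z - m)) :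
    r * ε ≤ ∑ z, s * (f z - m) := by
  rcases Nat.eq_zero_or_pos r with rfl | hr
  · simp
  have hsum : ∑ z, s * (f z - m) = r * (s * (1 / (r : ℝ) * ∑ z, f z - m)) := by
    rw [← mul_sum, sum_sub_distrib, sum_const, card_univ, Fintype.card_fin, nsmul_eq_mul]
    field_simp
  rw [hsum]
  gcongr

lemma natCast_mul_sum_le_sum_mul_sub {k r : ℕ} {f : Fin k → Fin r → ℝ} {s w m : Fin k → ℝ}
    {ε : ℝ} (hw : ∀ i, 0 ≤ w i) (h : ∀ i, ε ≤ s i * (1 / (r : ℝ) * ∑ z, f i z - m i)) :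
    r * ε * ∑ i, w i ≤ ∑ p : Fin k × Fin r, s p.1 * w p.1 * (f p.1 p.2 - m p.1) := by
  rw [Fintype.sum_prod_type, mul_sum]
  refine sum_le_sum fun i _ ↦ ?_
  calc r * ε * w i = w i * (r * ε) := by ring
    _ ≤ w i * ∑ z, s i * (f i z - m i) := by
      gcongr
      · exact hw i
      · exact natCast_mul_le_sum_mul_sub (h i)
    _ = ∑ z, s i * w i * (f i z - m i) := by
      rw [mul_sum]
      exact sum_congr rfl fun z _ ↦ by ring

lemma sq_mul_inv_sq_mul_eq_inv_sq {K : Type*} [Field K] (s c : K) (hs : s ^ 2 = 1) :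
    (s * (c ^ 2)⁻¹ * c) ^ 2 = (c ^ 2)⁻¹ := by
  rcases eq_or_ne c 0 with rfl | hc
  · simp
  · rw [mul_pow, mul_pow, hs]
    field_simp

theorem stmt1_general
    {Ω : Type*} [MeasurableSpace Ω] (μ : Measure Ω) [IsProbabilityMeasure μ]
    (k r : ℕ)
    (c : Fin k → ℕ)
    (D : Fin k → Fin r → Ω → ℝ)
    (hmeas : ∀ j z, Measurable (D j z))
    (hbdd : ∀ j z ω, D j z ω ∈ Set.Icc (0 : ℝ) ((c j : ℕ) : ℝ))
    (hindep : iIndepFun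
        (fun p : Fin k × Fin r => D p.1 p.2) μ)
    (dstar : Fin k → ℝ)
    (hmean : ∀ j z, ∫ ω, D j z ω ∂μ = dstar j)
    (ida : Fin k) (ε : ℝ) (hε : 0 ≤ ε) :
    μ {ω | ε ≤ dstar ida - (1 / (r : ℝ)) * ∑ z, D ida z ω ∧
           ∀ i, i ≠ ida → ε ≤ (1 / (r : ℝ)) * ∑ z, D i z ω - dstar i}
      ≤ ENNReal.ofReal
          (Real.exp (-2 * (r : ℝ) * ∑ i, ε ^ 2 / ((c i : ℕ) : ℝ) ^ 2)) := by
  set s : Fin k → ℝ := fun i ↦ if i = ida then -1 else 1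
  set w : Fin k → ℝ := fun i ↦ (((c i : ℕ) : ℝ) ^ 2)⁻¹
  have hs : ∀ i, s i ^ 2 = 1 := fun i ↦ by by_cases h : i = ida <;> simp [s, h]
  have hevent : {ω | ε ≤ dstar ida - (1 / (r : ℝ)) * ∑ z, D ida z ω ∧
      ∀ i, i ≠ ida → ε ≤ (1 / (r : ℝ)) * ∑ z, D i z ω - dstar i} ⊆
      {ω | r * ε * ∑ i, w i ≤ ∑ p : Fin k × Fin r, s p.1 * w p.1 * (D p.1 p.2 ω - dstar p.1)} := by
    rintro ω ⟨hida, hothers⟩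
    refine natCast_mul_sum_le_sum_mul_sub (f := fun i z ↦ D i z ω)
      (fun i ↦ inv_nonneg.2 (sq_nonneg _)) fun i ↦ ?_
    by_cases h : i = ida
    · subst h; simp only [s, if_pos rfl]; linarith
    · simp only [s, if_neg h, one_mul]; exact hothers i h
  have hexponent : -2 * (r * ε * ∑ i, w i) ^ 2 /
      ∑ p : Fin k × Fin r, (s p.1 * w p.1 * ((c p.1 : ℕ) - 0 : ℝ)) ^ 2 =
      -2 * (r : ℝ) * ∑ i, ε ^ 2 / ((c i : ℕ) : ℝ) ^ 2 := by
    simp only [sub_zero, w, sq_mul_inv_sq_mul_eq_inv_sq _ _ (hs _), Fintype.sum_prod_type,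
      sum_const, card_univ, Fintype.card_fin, nsmul_eq_mul, div_eq_mul_inv (ε ^ 2), ← mul_sum]
    calc -2 * (r * ε * ∑ i, w i) ^ 2 / (r * ∑ i, w i)
        = -2 * ε ^ 2 * ((r * ∑ i, w i) * (r * ∑ i, w i) / (r * ∑ i, w i)) := by ring
      _ = -2 * r * (ε ^ 2 * ∑ i, w i) := by rw [mul_self_div_self]; ring
  have hhoeffding := measureReal_sum_mul_sub_integral_ge_le_of_mem_Icc hindep
    (fun p ↦ (hmeas p.1 p.2).aemeasurable) (fun p ↦ ae_of_all _ (hbdd p.1 p.2))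
    (fun p ↦ s p.1 * w p.1) (t := r * ε * ∑ i, w i) (by positivity)
  simp only [hmean, hexponent] at hhoeffding
  calc _ ≤ _ := measure_mono hevent
    _ ≤ _ := (ENNReal.le_ofReal_iff_toReal_le (measure_ne_top _ _) (exp_pos _).le).2 hhoeffding

/-- Statistical model: `k` nonempty clusters of sizes `c 1, …, c k ≥ 1`,
`r ≥ 1` sampling iterations; for each cluster index `j`, the random variables
`D j 1, …, D j r` take values in `[0, c j]` and are identically distributed with common mean
`dstar j`; moreover the variables `D j z` are mutually independent across all pairs `(j, z)`.
The empirical mean is `d(a,j)(ω) = (1/r) · ∑_z D j z ω`. For a record `a` assigned to cluster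
`ida` with threshold `ε ≥ 0`, the probability that `a` is *uncertain*, i.e. that
`dstar ida − d(a,ida) ≥ ε` and `d(a,i) − dstar i ≥ ε` for every `i ≠ ida`, is at most
`exp(−2r · ∑_i ε² / (c i)²)`. -/
theorem stmt1
    {Ω : Type*} [MeasurableSpace Ω] (μ : Measure Ω) [IsProbabilityMeasure μ]
    (k r : ℕ) (hk : 1 ≤ k) (hr : 1 ≤ r)
    (c : Fin k → ℕ) (hc : ∀ i, 1 ≤ c i)
    (D : Fin k → Fin r → Ω → ℝ)
    (hmeas : ∀ j z, Measurable (D j z))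
    (hbdd : ∀ j z ω, D j z ω ∈ Set.Icc (0 : ℝ) ((c j : ℕ) : ℝ))
    (hident : ∀ j z z', IdentDistrib (D j z) (D j z') μ μ)
    (hindep : iIndepFun
        (fun p : Fin k × Fin r => D p.1 p.2) μ)
    (dstar : Fin k → ℝ)
    (hmean : ∀ j z, ∫ ω, D j z ω ∂μ = dstar j)
    (ida : Fin k) (ε : ℝ) (hε : 0 ≤ ε) :
    μ {ω | ε ≤ dstar ida - (1 / (r : ℝ)) * ∑ z, D ida z ω ∧
           ∀ i, i ≠ ida → ε ≤ (1 / (r : ℝ)) * ∑ z, D i z ω - dstar i}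
      ≤ ENNReal.ofReal
          (Real.exp (-2 * (r : ℝ) * ∑ i, ε ^ 2 / ((c i : ℕ) : ℝ) ^ 2)) :=
  stmt1_general μ k r c D hmeas hbdd hindep dstar hmean ida ε hε
end
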